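/- In a clean Automath book (a coherent book with no dead-end assumption lines), every assumption line's identifier x occurs in the subject-list γ_y of the indicator y of some definition line or primitive line. -/
import Mathlib


/-- Content of an Automath line: `---`, `PN`, or a term (abstractly a natural number). -/
inductive Content where
  | dash : Content
  | pn : Content
  | term : ℕ → Content
deriving DecidableEq

/-- An Automath line: indicator (`none` = ε), identifier, content, category. -/
structure Line where
  indicator : Option ℕ
  identifier : ℕ
  content : Content
  category : ℕ
deriving DecidableEq

abbrev Book := List Line

def Line.isAssum (l : Line) : Bool := l.content == Content.dash
def Line.isPrim (l : Line) : Bool := l.content == Content.pn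
def Line.isDefin (l : Line) : Bool := match l.content with | .term _ => true | _ => false

/-- Coherence: identifiers pairwise distinct, and each non-ε indicator is the
identifier of an earlier assumption line. -/
def Coherent (B : Book) : Prop :=
  (B.map Line.identifier).Nodup ∧
  ∀ m : ℕ, ∀ L : Line, B[m]? = some L → ∀ y : ℕ, L.indicator = some y →
    ∃ l : ℕ, l < m ∧ ∃ L' : Line, B[l]? = some L' ∧ L'.identifier = y ∧ L'.isAssum

/-- Index of the assumption line introducing identifier `y`. -/
def introIdx (B : Book) (y : ℕ) : Option ℕ :=
  B.findIdx? (fun l => l.identifier == y && l.isAssum)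

/-- Fuel-based computation of the subject-list γ of the line at index `i`. -/
def gammaAux (B : Book) : ℕ → ℕ → List ℕ
  | 0, i =>
    match B[i]? with
    | none => []
    | some l => [l.identifier]
  | fuel+1, i =>
    match B[i]? with
    | none => []
    | some l =>
      match l.indicator with
      | none => [l.identifier]
      | some y =>
        match introIdx B y with
        | none => [l.identifier]
        | some j => gammaAux B fuel j ++ [l.identifier]

/-- Subject-list γ_z of variable `z` (introduced by an assumption line). γ_ε = []. -/
def gammaOf (B : Book) (z : ℕ) : List ℕ :=
  match introIdx B z with
  | none => []
  | some i => gammaAux B i i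

/-- Fuel-based computation of the typing-context Γ of the line at index `i`. -/
def ctxAux (B : Book) : ℕ → ℕ → List (ℕ × ℕ)
  | 0, i =>
    match B[i]? with
    | none => []
    | some l => [(l.identifier, l.category)]
  | fuel+1, i =>
    match B[i]? with
    | none => []
    | some l =>
      match l.indicator with
      | none => [(l.identifier, l.category)]
      | some y =>
        match introIdx B y with
        | none => [(l.identifier, l.category)]
        | some j => ctxAux B fuel j ++ [(l.identifier, l.category)]

/-- Typing-context Γ_z of variable `z`. Γ_ε = ∅. -/
def ctxOf (B : Book) (z : ℕ) : List (ℕ × ℕ) :=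
  match introIdx B z with
  | none => []
  | some i => ctxAux B i i

/-- Subject-list of an indicator (γ_ε = [] for the empty indicator). -/
def gammaInd (B : Book) : Option ℕ → List ℕ
  | none => []
  | some y => gammaOf B y

/-- Typing-context of an indicator. -/
def ctxInd (B : Book) : Option ℕ → List (ℕ × ℕ)
  | none => []
  | some y => ctxOf B y

/-- y ≺ z : some line of `B` has indicator `y` (≠ ε) and identifier `z`. -/
def Prec (B : Book) (y z : ℕ) : Prop :=
  ∃ L ∈ B, L.indicator = some y ∧ L.identifier = z

/-- The line at index `i` is a dead-end assumption line. -/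
def DeadEnd (B : Book) (i : ℕ) : Prop :=
  ∃ L : Line, B[i]? = some L ∧ L.isAssum ∧
    ∀ j : ℕ, i < j → ∀ L' : Line, B[j]? = some L' → L'.indicator ≠ some L.identifier

/-- One removal step: delete a single dead-end assumption line. -/
def Step (B B' : Book) : Prop := ∃ i : ℕ, DeadEnd B i ∧ B' = B.eraseIdx i

/-- A clean book: coherent with no dead-end assumption lines. -/
def IsClean (B : Book) : Prop := Coherent B ∧ ∀ i : ℕ, ¬ DeadEnd B i

/-- An entry of the λD-environment Δ_B. -/
structure Entry where
  ctx : List (ℕ × ℕ)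
  const : ℕ
  args : List ℕ
  content : Content
  category : ℕ

def Fresh (B : Book) (x : ℕ) : Prop := ∀ L ∈ B, L.identifier ≠ x

def IndOk (B : Book) : Option ℕ → Prop
  | none => True
  | some z => ∃ L ∈ B, L.identifier = z ∧ L.isAssum

/-- Well-formed (ok) books with their translation Δ_B, relative to abstract
typing judgements `J Δ Γ M A` (Δ; Γ ⊢ M : A) and `S Δ Γ A` (Δ; Γ ⊢ A : s). -/
inductive Ok (J : List Entry → List (ℕ × ℕ) → ℕ → ℕ → Prop)
    (S : List Entry → List (ℕ × ℕ) → ℕ → Prop) : Book → List Entry → Prop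
  | nil : Ok J S [] []
  | assum {B : Book} {Δ : List Entry} {ind : Option ℕ} {x A : ℕ} :
      Ok J S B Δ → Fresh B x → IndOk B ind → S Δ (ctxInd B ind) A →
      Ok J S (B ++ [⟨ind, x, Content.dash, A⟩]) Δ
  | defin {B : Book} {Δ : List Entry} {ind : Option ℕ} {c M A : ℕ} :
      Ok J S B Δ → Fresh B c → IndOk B ind → J Δ (ctxInd B ind) M A →
      Ok J S (B ++ [⟨ind, c, Content.term M, A⟩])
        (Δ ++ [⟨ctxInd B ind, c, gammaInd B ind, Content.term M, A⟩])
  | prim {B : Book} {Δ : List Entry} {ind : Option ℕ} {c A : ℕ} :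
      Ok J S B Δ → Fresh B c → IndOk B ind → S Δ (ctxInd B ind) A →
      Ok J S (B ++ [⟨ind, c, Content.pn, A⟩])
        (Δ ++ [⟨ctxInd B ind, c, gammaInd B ind, Content.pn, A⟩])


section AuxStmt9

lemma introIdx_spec {B : Book} {y i : ℕ} (h : introIdx B y = some i) :
    ∃ hi : i < B.length, B[i].identifier = y ∧ B[i].isAssum ∧
      ∀ j, j < i → ∀ hj : j < B.length, ¬(B[j].identifier = y ∧ B[j].isAssum) := by
  rw [introIdx, List.findIdx?_eq_some_iff_getElem] at h
  obtain ⟨hi, hp, hmin⟩ := h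
  rw [Bool.and_eq_true, beq_iff_eq] at hp
  refine ⟨hi, hp.1, hp.2, ?_⟩
  intro j hj hjl hcon
  exact hmin j hj (by simp [hcon.1, hcon.2])

lemma introIdx_exists {B : Book} {y k : ℕ} {L : Line} (hk : B[k]? = some L)
    (hy : L.identifier = y) (ha : L.isAssum) : ∃ i, introIdx B y = some i := by
  cases h : introIdx B y with
  | some i => exact ⟨i, rfl⟩
  | none =>
    rw [introIdx, List.findIdx?_eq_none_iff] at h
    have hmem : L ∈ B := by
      rw [List.mem_iff_getElem?]; exact ⟨k, hk⟩
    have := h L hmem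
    simp [hy, ha] at this

lemma introIdx_le {B : Book} {y i k : ℕ} {L : Line} (h : introIdx B y = some i)
    (hk : B[k]? = some L) (hy : L.identifier = y) (ha : L.isAssum) : i ≤ k := by
  obtain ⟨hi, _, _, hmin⟩ := introIdx_spec h
  by_contra hlt
  push_neg at hlt
  obtain ⟨hkl, hLe⟩ := List.getElem?_eq_some_iff.mp hk
  exact hmin k hlt hkl ⟨hLe ▸ hy, hLe ▸ ha⟩

/-- In a coherent book, the intro index of an indicator is strictly below the line. -/
lemma introIdx_lt {B : Book} (hc : Coherent B) {i j y : ℕ} {L : Line}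
    (hi : B[i]? = some L) (hy : L.indicator = some y) (hj : introIdx B y = some j) :
    j < i := by
  obtain ⟨l, hl, L', hL', hid, has⟩ := hc.2 i L hi y hy
  exact lt_of_le_of_lt (introIdx_le hj hL' hid has) hl

lemma gammaAux_fuel (B : Book) (hc : Coherent B) :
    ∀ i f1 f2, i ≤ f1 → i ≤ f2 → gammaAux B f1 i = gammaAux B f2 i := by
  intro i
  induction i using Nat.strong_induction_on with
  | _ i ih =>
    have succ_zero : ∀ g, i ≤ g + 1 → i = 0 → gammaAux B (g+1) i = gammaAux B 0 i := by
      intro g hg hi0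
      rcases hB : B[i]? with _ | l <;> simp only [gammaAux, hB]
      rcases hind : l.indicator with _ | y <;> simp only [hind]
      rcases hj : introIdx B y with _ | j <;> simp only [hj]
      exact absurd (introIdx_lt hc hB hind hj) (by omega)
    intro f1 f2 h1 h2
    cases f1 with
    | zero =>
      cases f2 with
      | zero => rfl
      | succ g2 => exact (succ_zero g2 h2 (by omega)).symm
    | succ g1 =>
      cases f2 with
      | zero => exact succ_zero g1 h1 (by omega)
      | succ g2 =>
        rcases hB : B[i]? with _ | l <;> simp only [gammaAux, hB]
        rcases hind : l.indicator with _ | y <;> simp only [hind]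
        rcases hj : introIdx B y with _ | j <;> simp only [hj]
        have hji : j < i := introIdx_lt hc hB hind hj
        rw [ih j hji g1 g2 (by omega) (by omega)]

lemma mem_gammaAux {B : Book} {i : ℕ} {l : Line} (hB : B[i]? = some l) (f : ℕ) :
    l.identifier ∈ gammaAux B f i := by
  cases f with
  | zero => simp [gammaAux, hB]
  | succ g =>
    simp only [gammaAux, hB]
    rcases hind : l.indicator with _ | y <;> simp only [hind]
    · simp
    · rcases hj : introIdx B y with _ | j <;> simp [hj]

/-- If an assumption line with indicator `some y` introduces `z`, then
`γ_z = γ_y ++ [z]`. -/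
lemma gammaOf_step {B : Book} (hc : Coherent B) {j y : ℕ} {L : Line}
    (hj : B[j]? = some L) (ha : L.isAssum) (hy : L.indicator = some y) :
    gammaOf B L.identifier = gammaOf B y ++ [L.identifier] := by
  -- introIdx of L.identifier is j (by Nodup of identifiers)
  obtain ⟨j', hj'⟩ := introIdx_exists hj rfl ha
  obtain ⟨hj'l, hid', has', _⟩ := introIdx_spec hj'
  obtain ⟨hjl, hLe⟩ := List.getElem?_eq_some_iff.mp hj
  have hjeq : j' = j := by
    have hnd := hc.1
    have : (B.map Line.identifier)[j']'(by simpa using hj'l) =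
           (B.map Line.identifier)[j]'(by simpa using hjl) := by
      simp only [List.getElem_map]
      rw [hid', hLe]
    exact (List.Nodup.getElem_inj_iff hnd).mp this
  subst hjeq
  -- the indicator y has an intro index k < j'
  obtain ⟨k0, hk0lt, L0, hL0, hid0, has0⟩ := hc.2 j' L hj y hy
  obtain ⟨k, hk⟩ := introIdx_exists hL0 hid0 has0
  have hkj : k < j' := introIdx_lt hc hj hy hk
  obtain ⟨m, rfl⟩ : ∃ m, j' = m + 1 := ⟨j' - 1, by omega⟩
  simp only [gammaOf, hj']
  simp only [gammaAux, hj, hy, hk]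
  rw [gammaAux_fuel B hc k m k (by omega) le_rfl]

lemma main_aux {B : Book} (hclean : IsClean B) :
    ∀ n i L, B.length - i ≤ n → B[i]? = some L → L.isAssum →
    ∀ x, x ∈ gammaOf B L.identifier →
    ∃ L' ∈ B, (L'.isDefin ∨ L'.isPrim) ∧ x ∈ gammaInd B L'.indicator := by
  obtain ⟨hc, hnd⟩ := hclean
  intro n
  induction n with
  | zero =>
    intro i L hn hB ha x hx
    obtain ⟨hlt, -⟩ := List.getElem?_eq_some_iff.mp hB
    omega
  | succ n ih =>
    intro i L hn hB ha x hx
    have hnde := hnd i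
    rw [DeadEnd] at hnde
    push_neg at hnde
    obtain ⟨j, hij, L1, hL1, hind1⟩ := hnde L hB ha
    have hL1mem : L1 ∈ B := by rw [List.mem_iff_getElem?]; exact ⟨j, hL1⟩
    have hjlen := (List.getElem?_eq_some_iff.mp hL1).1
    cases hcon : L1.content with
    | dash =>
      have ha1 : L1.isAssum := by simp [Line.isAssum, hcon]
      have hstep := gammaOf_step hc hL1 ha1 hind1
      exact ih j L1 (by omega) hL1 ha1 x (by rw [hstep]; exact List.mem_append_left _ hx)
    | pn =>
      refine ⟨L1, hL1mem, Or.inr (by simp [Line.isPrim, hcon]), ?_⟩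
      rw [hind1]
      exact hx
    | term M =>
      refine ⟨L1, hL1mem, Or.inl (by simp [Line.isDefin, hcon]), ?_⟩
      rw [hind1]
      exact hx

end AuxStmt9

/-- in a clean book, every assumption line's identifier occurs in the
subject-list of the indicator of some definition or primitive line. -/
theorem stmt9 (B : Book) (hclean : IsClean B) (L : Line) (hL : L ∈ B) (ha : L.isAssum) :
    ∃ L' ∈ B, (L'.isDefin ∨ L'.isPrim) ∧ L.identifier ∈ gammaInd B L'.indicator := by
  obtain ⟨i, hi⟩ := List.mem_iff_getElem?.mp hL
  have hx : L.identifier ∈ gammaOf B L.identifier := by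
    obtain ⟨k, hk⟩ := introIdx_exists hi rfl ha
    obtain ⟨hkl, hid, _, _⟩ := introIdx_spec hk
    simp only [gammaOf, hk]
    have := mem_gammaAux (l := B[k]) (List.getElem?_eq_getElem hkl) k
    rwa [hid] at this
  exact main_aux hclean (B.length) i L (by omega) hi ha L.identifier hx
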